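/- Every normal word u in the free L-algebra has a unique expression u = u_1 ≻ (u_2 ≻ (⋯ ≻ (u_{n−1} ≻ u_n)⋯)) with n ≥ 1, where each u_i is a normal word and u_n is not of the form a ≻ b; consequently [u ≺ w] = u_1 ≻ (u_2 ≻ (⋯ ≻ (u_{n−1} ≻ (u_n ≺ w))⋯)) for any normal word w. -/
import Mathlib


/-- Ω-words for Ω = {≺, ≻}: `p u v` denotes u ≺ v and `s u v` denotes u ≻ v. -/
inductive LW (X : Type) : Type
  | var : X → LW X
  | p : LW X → LW X → LW X
  | s : LW X → LW X → LW X
deriving DecidableEq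

namespace LW

variable {X : Type}

/-- number of occurrences of variables, |u|_X -/
def szX : LW X → ℕ
  | var _ => 1
  | p u v => szX u + szX v
  | s u v => szX u + szX v

/-- The weight-lexicographic ordering on Ω-words: wt(x) = (1,x),
wt(δᵢ(u₁,u₂)) = (|u|_X, δᵢ, u₁, u₂) with ≻ < ≺, compared lexicographically. -/
inductive LLt [LinearOrder X] : LW X → LW X → Prop
  | size {u v : LW X} : szX u < szX v → LLt u v
  | var {x y : X} : x < y → LLt (var x) (var y)
  | sp {u1 u2 v1 v2 : LW X} : szX (s u1 u2) = szX (p v1 v2) → LLt (s u1 u2) (p v1 v2)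
  | s1 {u1 u2 v1 v2 : LW X} : szX (s u1 u2) = szX (s v1 v2) → LLt u1 v1 →
      LLt (s u1 u2) (s v1 v2)
  | s2 {u1 u2 v2 : LW X} : szX (s u1 u2) = szX (s u1 v2) → LLt u2 v2 →
      LLt (s u1 u2) (s u1 v2)
  | p1 {u1 u2 v1 v2 : LW X} : szX (p u1 u2) = szX (p v1 v2) → LLt u1 v1 →
      LLt (p u1 u2) (p v1 v2)
  | p2 {u1 u2 v2 : LW X} : szX (p u1 u2) = szX (p u1 v2) → LLt u2 v2 →
      LLt (p u1 u2) (p u1 v2)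

/-- Normal words: x ∈ X is normal; v ≻ w is normal if v, w are; v ≺ w is normal
if v, w are normal and v is not of the form v₁ ≻ v₂. -/
inductive Normal : LW X → Prop
  | var {x : X} : Normal (var x)
  | suc {u v : LW X} : Normal u → Normal v → Normal (s u v)
  | pre {u v : LW X} : Normal u → Normal v → (∀ a b, u ≠ s a b) → Normal (p u v)

end LW

/-- A ⋆-Ω-word for Ω = {≺,≻}. -/
inductive LCtx (X : Type) : Type
  | hole : LCtx X
  | pL : LCtx X → LW X → LCtx X
  | pR : LW X → LCtx X → LCtx X
  | sL : LCtx X → LW X → LCtx X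
  | sR : LW X → LCtx X → LCtx X

/-- Substitution of an Ω-word for ⋆ in a ⋆-Ω-word. -/
def LCtx.subst {X : Type} : LCtx X → LW X → LW X
  | .hole, u => u
  | .pL c w, u => .p (c.subst u) w
  | .pR w c, u => .p w (c.subst u)
  | .sL c w, u => .s (c.subst u) w
  | .sR w c, u => .s w (c.subst u)
section

variable {X k : Type} [Field k]

/-- The free Ω-algebra k(X,Ω), Ω = {≺,≻}. -/
abbrev LPoly (X k : Type) [Field k] := LW X →₀ k

/-- The s-Ω-word u|_s, extended linearly. -/
noncomputable def applyC (c : LCtx X) (f : LPoly X k) : LPoly X k :=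
  Finsupp.mapDomain c.subst f

/-- The Ω-ideal of k(X,Ω) generated by all (x≻y)≺z − x≻(y≺z). -/
noncomputable def LRelId (X k : Type) [Field k] : Submodule k (LPoly X k) :=
  Submodule.span k {g | ∃ (c : LCtx X) (x y z : LW X),
    g = applyC c (Finsupp.single (.p (.s x y) z) (1 : k)
          - Finsupp.single (.s x (.p y z)) (1 : k))}

/-- The free L-algebra L(X) = k(X,Ω)/Id((x≻y)≺z − x≻(y≺z)). -/
abbrev FreeL (X k : Type) [Field k] := LPoly X k ⧸ LRelId X k

/-- The image of an Ω-word in the free L-algebra. -/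
noncomputable def lmk (X k : Type) [Field k] (w : LW X) : FreeL X k :=
  Submodule.Quotient.mk (Finsupp.single w (1 : k))

end
/-- `NFrel k u w`: w is the normal form [u] of the Ω-word u in L(X). -/
def NFrel (X k : Type) [Field k] (u w : LW X) : Prop :=
  LW.Normal w ∧ lmk X k u = lmk X k w
namespace LWAux

open LW

variable {X : Type}

/-- Context composition: (c.comp c').subst u = c.subst (c'.subst u). -/
def LCtx.comp : LCtx X → LCtx X → LCtx X
  | .hole, c' => c'
  | .pL c w, c' => .pL (LCtx.comp c c') w
  | .pR w c, c' => .pR w (LCtx.comp c c')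
  | .sL c w, c' => .sL (LCtx.comp c c') w
  | .sR w c, c' => .sR w (LCtx.comp c c')

lemma comp_subst (c c' : LCtx X) (u : LW X) :
    (LCtx.comp c c').subst u = c.subst (c'.subst u) := by
  induction c with
  | hole => rfl
  | pL c w ih => simp [LCtx.comp, LCtx.subst, ih]
  | pR w c ih => simp [LCtx.comp, LCtx.subst, ih]
  | sL c w ih => simp [LCtx.comp, LCtx.subst, ih]
  | sR w c ih => simp [LCtx.comp, LCtx.subst, ih]

variable {k : Type} [Field k]

lemma applyC_applyC (c c' : LCtx X) (f : LPoly X k) :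
    applyC c (applyC c' f) = applyC (LCtx.comp c c') f := by
  unfold applyC
  rw [← Finsupp.mapDomain_comp]
  congr 1
  funext u
  simp [Function.comp, comp_subst]

lemma applyC_mem (c : LCtx X) {f : LPoly X k} (hf : f ∈ LRelId X k) :
    applyC c f ∈ LRelId X k := by
  have : applyC c f = Finsupp.lmapDomain k k c.subst f := rfl
  rw [this]
  have hmap : Submodule.map (Finsupp.lmapDomain k k (LCtx.subst c)) (LRelId X k)
      ≤ LRelId X k := by
    rw [LRelId, Submodule.map_span, Submodule.span_le]
    rintro g ⟨g', ⟨c', x, y, z, rfl⟩, rfl⟩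
    apply Submodule.subset_span
    exact ⟨LCtx.comp c c', x, y, z, (applyC_applyC c c' _)⟩
  exact hmap ⟨f, hf, rfl⟩

lemma lmk_eq_iff (u v : LW X) :
    lmk X k u = lmk X k v ↔
      (Finsupp.single u (1:k) - Finsupp.single v (1:k)) ∈ LRelId X k := by
  rw [lmk, lmk, Submodule.Quotient.eq]

lemma lmk_rel (x y z : LW X) :
    lmk X k (.p (.s x y) z) = lmk X k (.s x (.p y z)) := by
  rw [lmk_eq_iff]
  apply Submodule.subset_span
  refine ⟨.hole, x, y, z, ?_⟩
  show _ = Finsupp.mapDomain (LCtx.subst .hole) _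
  rw [show (LCtx.subst (.hole : LCtx X)) = id from rfl, Finsupp.mapDomain_id]

lemma lmk_congr_sR (a : LW X) {u v : LW X} (h : lmk X k u = lmk X k v) :
    lmk X k (.s a u) = lmk X k (.s a v) := by
  rw [lmk_eq_iff] at h ⊢
  have := applyC_mem (k := k) (.sR a .hole) h
  have heq : applyC (X := X) (.sR a .hole)
      (Finsupp.single u (1:k) - Finsupp.single v (1:k))
      = Finsupp.single (.s a u) (1:k) - Finsupp.single (.s a v) (1:k) := by
    have hsub : applyC (X := X) (.sR a .hole)
        (Finsupp.single u (1:k) - Finsupp.single v (1:k))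
        = applyC (X := X) (.sR a .hole) (Finsupp.single u (1:k))
          - applyC (X := X) (.sR a .hole) (Finsupp.single v (1:k)) :=
      map_sub (Finsupp.lmapDomain k k (LCtx.subst (.sR a .hole))) _ _
    rw [hsub]
    unfold applyC
    rw [Finsupp.mapDomain_single, Finsupp.mapDomain_single]
    rfl
  rwa [heq] at this

lemma foldr_normal (l : List (LW X)) (t : LW X) (hl : ∀ w ∈ l, Normal w)
    (ht : Normal t) : Normal (l.foldr .s t) := by
  induction l with
  | nil => exact ht
  | cons a l ih =>
      exact Normal.suc (hl a (by simp)) (ih fun w hw => hl w (List.mem_cons_of_mem a hw))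

lemma foldr_inj {l l' : List (LW X)} {t t' : LW X}
    (ht : ∀ a b, t ≠ LW.s a b) (ht' : ∀ a b, t' ≠ LW.s a b)
    (h : l.foldr LW.s t = l'.foldr LW.s t') : l = l' ∧ t = t' := by
  induction l generalizing l' with
  | nil =>
      cases l' with
      | nil => exact ⟨rfl, h⟩
      | cons a l' => exact absurd h (ht _ _)
  | cons a l ih =>
      cases l' with
      | nil => exact absurd h.symm (ht' _ _)
      | cons a' l' =>
          simp only [List.foldr_cons, LW.s.injEq] at h
          obtain ⟨h1, h2⟩ := h
          obtain ⟨hl, htt⟩ := ih h2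
          exact ⟨by rw [h1, hl], htt⟩

end LWAux

/-- every normal word u has a unique expression
u = u₁ ≻ (u₂ ≻ (⋯ ≻ (u_{n−1} ≻ u_n)⋯)) with n ≥ 1, each uᵢ normal and u_n not of
the form a ≻ b; consequently for any normal w,
[u ≺ w] = u₁ ≻ (u₂ ≻ (⋯ ≻ (u_{n−1} ≻ (u_n ≺ w))⋯)). -/
theorem unique_right_comb (X k : Type) [Field k] (u : LW X) (hu : LW.Normal u) :
    (∃! q : List (LW X) × LW X, (∀ w ∈ q.1, LW.Normal w) ∧ LW.Normal q.2 ∧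
        (∀ a b, q.2 ≠ .s a b) ∧ u = q.1.foldr .s q.2) ∧
    (∀ (l : List (LW X)) (un : LW X), (∀ w ∈ l, LW.Normal w) → LW.Normal un →
      (∀ a b, un ≠ .s a b) → u = l.foldr .s un →
      ∀ w : LW X, LW.Normal w → NFrel X k (.p u w) (l.foldr .s (.p un w))) := by
  constructor
  · -- existence and uniqueness of the decomposition
    -- existence by induction on u
    have hex : ∀ v : LW X, LW.Normal v → ∃ q : List (LW X) × LW X,
        (∀ w ∈ q.1, LW.Normal w) ∧ LW.Normal q.2 ∧
        (∀ a b, q.2 ≠ .s a b) ∧ v = q.1.foldr .s q.2 := by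
      intro v hv
      induction hv with
      | var => exact ⟨([], _), by simp, LW.Normal.var, by simp, rfl⟩
      | @suc a b ha hb iha ihb =>
          obtain ⟨⟨l, t⟩, h1, h2, h3, h4⟩ := ihb
          exact ⟨(a :: l, t), by
            intro w hw
            rcases List.mem_cons.1 hw with rfl | hw
            · exact ha
            · exact h1 w hw, h2, h3, by simp [← h4]⟩
      | @pre a b ha hb hns iha ihb =>
          exact ⟨([], .p a b), by simp, LW.Normal.pre ha hb hns, by simp, rfl⟩
    obtain ⟨q, hq1, hq2, hq3, hq4⟩ := hex u hu
    refine ⟨q, ⟨hq1, hq2, hq3, hq4⟩, ?_⟩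
    rintro ⟨l', t'⟩ ⟨h1', h2', h3', h4'⟩
    obtain ⟨hl, ht⟩ := LWAux.foldr_inj h3' hq3 (h4'.symm.trans hq4)
    cases q
    simp_all
  · intro l un hl hun hns hu' w hw
    subst hu'
    constructor
    · apply LWAux.foldr_normal _ _ hl
      exact LW.Normal.pre hun hw hns
    · clear hu
      induction l with
      | nil => rfl
      | cons a l ih =>
          have ih' := ih (fun v hv => hl v (List.mem_cons_of_mem a hv))
          simp only [List.foldr_cons]
          calc lmk X k (.p (.s a (l.foldr .s un)) w)
              = lmk X k (.s a (.p (l.foldr .s un) w)) := LWAux.lmk_rel a _ w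
            _ = lmk X k (.s a (l.foldr .s (.p un w))) := LWAux.lmk_congr_sR a ih'
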